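/- arXiv:math/0510434 — 4 statements merged into one kernel-verified Lean document; each statement's English description precedes it below -/
import Mathlib

section
/- Let K be an algebraically closed field and f = p/q a rational function in n ≥ 2 variables with gcd(p,q) = 1. If f is composite, i.e., f = r ∘ g for some univariate rational function r of degree ≥ 2 and some g ∈ K(x₁,...,xₙ), then for every λ ∈ K ∪ {∞} with deg(p - λq) = deg f, the polynomial p - λq is reducible in K[x₁,...,xₙ]. -/
/-!
Write `f = r ∘ g` with `r = a / b` (`a`, `b` coprime, `m = max (deg a) (deg b) ≥ 2`) and `g = u / v`
in lowest terms. The polynomials `A = v^m a(u/v)` and `B = v^m b(u/v)` are coprime and `p B = q A`,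
so `p ~ A`, `q ~ B` and `p - λ q ~ v^m c(u/v)` with `c = a - λ b`. Over an algebraically closed
field `v^m c(u/v)` is a product of `m` factors `u - s v` (`s ∈ K ∪ {∞}`, the factor at `∞` being
`v`), each of degree at most `Δ = max (deg u) (deg v)`. Two distinct factors `u - s v` span `u` and
`v`, so at most one of them has degree below `Δ`; since `a` and `b` have no common root on `ℙ¹`, one
of `A`, `B` has degree `m Δ`. So if `deg (p - λ q) = deg f = m Δ`, then `p - λ q` is a product of
two factors of degrees `Δ` and `(m - 1) Δ`, which is reducible unless `Δ = 0`, i.e. unless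
`p - λ q` is constant.
-/

open MvPolynomial

noncomputable section
variable {K : Type*} [Field K]

abbrev Lf (n : ℕ) (K : Type*) [Field K] := FractionRing (MvPolynomial (Fin n) K)

def pencil {n : ℕ} (p q : MvPolynomial (Fin n) K) : Option K → MvPolynomial (Fin n) K
  | none => q
  | some l => p - C l * q

def ratι (n : ℕ) (K : Type*) [Field K] : K →+* Lf n K :=
  (algebraMap (MvPolynomial (Fin n) K) (Lf n K)).comp (MvPolynomial.C : K →+* MvPolynomial (Fin n) K)

def IsComposite {n : ℕ} (f : Lf n K) : Prop :=
  ∃ (a b : Polynomial K) (g : Lf n K),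
    IsCoprime a b ∧ 2 ≤ max a.natDegree b.natDegree ∧
    Polynomial.eval₂ (ratι n K) g b ≠ 0 ∧
    f = Polynomial.eval₂ (ratι n K) g a / Polynomial.eval₂ (ratι n K) g b

def jacZero (a b u v : MvPolynomial (Fin 2) K) : Prop :=
  (b * pderiv 0 a - a * pderiv 0 b) * (v * pderiv 1 u - u * pderiv 1 v)
    = (b * pderiv 1 a - a * pderiv 1 b) * (v * pderiv 0 u - u * pderiv 0 v)

def DZero (f g : Lf 2 K) : Prop :=
  ∃ a b u v : MvPolynomial (Fin 2) K, b ≠ 0 ∧ v ≠ 0 ∧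
    f = algebraMap _ _ a / algebraMap _ _ b ∧ g = algebraMap _ _ u / algebraMap _ _ v ∧
    jacZero a b u v

def fdeg {n : ℕ} (g : Lf n K) : ℕ :=
  sInf {m | ∃ u v : MvPolynomial (Fin n) K, v ≠ 0 ∧
    g = algebraMap _ _ u / algebraMap _ _ v ∧ m = max u.totalDegree v.totalDegree}

def nfac {n : ℕ} (P : MvPolynomial (Fin n) K) : ℕ :=
  sSup {m | ∃ S : Finset (MvPolynomial (Fin n) K), S.card = m ∧
    (∀ F ∈ S, Irreducible F ∧ F ∣ P) ∧
    (S : Set (MvPolynomial (Fin n) K)).Pairwise fun a b => ¬ Associated a b}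

section Degree

variable {σ R : Type*} [CommRing R] [IsDomain R]

theorem totalDegree_multiset_prod_of_isDomain {s : Multiset (MvPolynomial σ R)} (hs : 0 ∉ s) :
    s.prod.totalDegree = (s.map totalDegree).sum := by
  induction s using Multiset.induction with
  | empty => simp
  | cons x s ih =>
    rw [Multiset.mem_cons, not_or] at hs
    rw [Multiset.prod_cons, totalDegree_mul_of_isDomain (Ne.symm hs.1)
      (Multiset.prod_ne_zero hs.2), ih hs.2, Multiset.map_cons, Multiset.sum_cons]

theorem Associated.totalDegree_eq {x y : MvPolynomial σ R} (h : Associated x y) :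
    x.totalDegree = y.totalDegree := by
  rcases eq_or_ne y 0 with rfl | hy
  · rw [h.eq_zero_iff.mpr rfl]
  · exact le_antisymm (totalDegree_le_of_dvd_of_isDomain h.dvd hy)
      (totalDegree_le_of_dvd_of_isDomain h.symm.dvd (mt h.eq_zero_iff.mp hy))

end Degree

theorem not_irreducible_of_totalDegree_eq_zero {σ : Type*} {P : MvPolynomial σ K}
    (h : P.totalDegree = 0) : ¬ Irreducible P := by
  rw [totalDegree_eq_zero_iff_eq_C.mp h]
  intro hirr
  exact hirr.not_isUnit ((isUnit_iff_ne_zero.mpr fun h0 => hirr.ne_zero (by simp [h0])).map C)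

theorem associated_of_mul_eq_mul {α : Type*} [CommMonoidWithZero α]
    [IsLeftCancelMulZero α] [DecompositionMonoid α]
    {p q x y : α} (hpq : IsRelPrime p q) (hxy : IsRelPrime x y) (h : p * y = q * x) :
    Associated p x :=
  associated_of_dvd_dvd (hpq.dvd_of_dvd_mul_left ⟨y, h.symm⟩)
    (hxy.dvd_of_dvd_mul_right ⟨q, by rw [h, mul_comm]⟩)

theorem IsRelPrime.multiset_prod_left {α : Type*} [CommMonoid α] [DecompositionMonoid α]
    {s : Multiset α} {y : α}
    (h : ∀ x ∈ s, IsRelPrime x y) : IsRelPrime s.prod y :=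
  Multiset.prod_induction (IsRelPrime · y) s (fun _ _ => IsRelPrime.mul_left)
    isRelPrime_one_left h

namespace Polynomial

theorem ne_zero_of_isCoprime {a b : K[X]} (hab : IsCoprime a b)
    (hm : 0 < max a.natDegree b.natDegree) : a ≠ 0 := by
  rintro rfl
  have := natDegree_eq_zero_of_isUnit (isCoprime_zero_left.mp hab)
  simp_all

theorem max_natDegree_sub_C_mul (a b : K[X]) (l : K) :
    max (a - C l * b).natDegree b.natDegree = max a.natDegree b.natDegree := by
  have hb := natDegree_C_mul_le l b
  have h₁ := natDegree_sub_le a (C l * b)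
  have h₂ : a.natDegree ≤ max (a - C l * b).natDegree (C l * b).natDegree := by
    simpa using natDegree_add_le (a - C l * b) (C l * b)
  omega

end Polynomial

section Pencil

variable {n : ℕ} {u v : MvPolynomial (Fin n) K}

theorem totalDegree_pencil_le (u v : MvPolynomial (Fin n) K) (s : Option K) :
    (pencil u v s).totalDegree ≤ max u.totalDegree v.totalDegree := by
  cases s with
  | none => exact le_max_right _ _
  | some r =>
    refine (totalDegree_sub _ _).trans (max_le_max le_rfl ?_)
    simpa using totalDegree_mul (C r) v

theorem mem_span_pencil_pair {s s' : Option K} (h : s ≠ s') :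
    u ∈ Submodule.span K {pencil u v s, pencil u v s'} ∧
      v ∈ Submodule.span K {pencil u v s, pencil u v s'} := by
  have hinf (r : K) : u ∈ Submodule.span K {v, u - C r * v} ∧
      v ∈ Submodule.span K {v, u - C r * v} := by
    simp only [Submodule.mem_span_pair, smul_eq_C_mul]
    exact ⟨⟨r, 1, by simp⟩, ⟨1, 0, by simp⟩⟩
  rcases s with _ | r <;> rcases s' with _ | r'
  · exact absurd rfl h
  · exact hinf r'
  · rw [Set.pair_comm]; exact hinf r
  · have hd : r' - r ≠ 0 := sub_ne_zero.mpr fun hr => h (by rw [hr])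
    have hinv : C (r' - r)⁻¹ * (C r' - C r) = (1 : MvPolynomial (Fin n) K) := by
      rw [← map_sub, ← map_mul, inv_mul_cancel₀ hd, map_one]
    simp only [pencil, Submodule.mem_span_pair, smul_eq_C_mul]
    refine ⟨⟨r' * (r' - r)⁻¹, -(r * (r' - r)⁻¹), ?_⟩, ⟨(r' - r)⁻¹, -(r' - r)⁻¹, ?_⟩⟩
    · simp only [map_mul, map_neg]; linear_combination u * hinv
    · simp only [map_neg]; linear_combination v * hinv

theorem le_max_totalDegree_pencil {s s' : Option K} (h : s ≠ s') :
    max u.totalDegree v.totalDegree ≤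
      max (pencil u v s).totalDegree (pencil u v s').totalDegree := by
  have hspan : Submodule.span K {pencil u v s, pencil u v s'} ≤ restrictTotalDegree (Fin n) K
      (max (pencil u v s).totalDegree (pencil u v s').totalDegree) := by
    rw [Submodule.span_le, Set.insert_subset_iff, Set.singleton_subset_iff]
    exact ⟨(mem_restrictTotalDegree _ _ _).mpr (le_max_left _ _),
      (mem_restrictTotalDegree _ _ _).mpr (le_max_right _ _)⟩
  obtain ⟨hu, hv⟩ := mem_span_pencil_pair h
  exact max_le ((mem_restrictTotalDegree _ _ _).mp (hspan hu))
    ((mem_restrictTotalDegree _ _ _).mp (hspan hv))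

theorem isRelPrime_pencil (huv : IsRelPrime u v) {s s' : Option K} (h : s ≠ s') :
    IsRelPrime (pencil u v s) (pencil u v s') := by
  intro z hz hz'
  have hspan : Submodule.span K {pencil u v s, pencil u v s'} ≤
      (Ideal.span {z}).restrictScalars K := by
    rw [Submodule.span_le, Set.insert_subset_iff, Set.singleton_subset_iff]
    exact ⟨Ideal.mem_span_singleton.mpr hz, Ideal.mem_span_singleton.mpr hz'⟩
  obtain ⟨hu, hv⟩ := mem_span_pencil_pair h
  exact huv (Ideal.mem_span_singleton.mp (hspan hu)) (Ideal.mem_span_singleton.mp (hspan hv))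

end Pencil

open scoped Polynomial

section Homogenize

variable {n : ℕ}

/-- The roots on `ℙ¹ = K ∪ {∞}` of `w` viewed as a binary form of degree `m`; `none` is the point
at infinity, with multiplicity `m - deg w`. -/
def projRoots (m : ℕ) (w : K[X]) : Multiset (Option K) :=
  Multiset.replicate (m - w.natDegree) none + w.roots.map some

/-- `v ^ m * w (u / v)`, written through the factorisation of `w`. -/
def homogenize (u v : MvPolynomial (Fin n) K) (m : ℕ) (w : K[X]) : MvPolynomial (Fin n) K :=
  C w.leadingCoeff * ((projRoots m w).map (pencil u v)).prod

section ProjRoots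

variable {m : ℕ} {w : K[X]}

theorem none_mem_projRoots : none ∈ projRoots m w ↔ w.natDegree < m := by
  simp [projRoots, Multiset.mem_replicate, Nat.sub_ne_zero_iff_lt]

theorem some_mem_projRoots {r : K} : some r ∈ projRoots m w ↔ r ∈ w.roots := by
  simp [projRoots, Multiset.mem_replicate]

theorem card_projRoots [IsAlgClosed K] (hw : w.natDegree ≤ m) :
    Multiset.card (projRoots m w) = m := by
  simp only [projRoots, Multiset.card_add, Multiset.card_replicate, Multiset.card_map,
    IsAlgClosed.card_roots_eq_natDegree]
  omega

theorem not_mem_projRoots_of_isCoprime {c e : K[X]} (hce : IsCoprime c e)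
    (hm : max c.natDegree e.natDegree = m) {s : Option K} (hs : s ∈ projRoots m c) :
    s ∉ projRoots m e := by
  rcases s with _ | r
  · rw [none_mem_projRoots] at hs ⊢
    omega
  · rw [some_mem_projRoots] at hs ⊢
    intro he
    obtain ⟨x, y, hxy⟩ := hce
    simpa [(Polynomial.mem_roots'.mp hs).2.eq_zero, (Polynomial.mem_roots'.mp he).2.eq_zero] using
      congrArg (Polynomial.eval r) hxy

end ProjRoots

variable {u v : MvPolynomial (Fin n) K}

theorem totalDegree_prod_pencil_le (u v : MvPolynomial (Fin n) K) (S : Multiset (Option K)) :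
    ((S.map (pencil u v)).prod).totalDegree ≤
      Multiset.card S * max u.totalDegree v.totalDegree := by
  refine (totalDegree_multiset_prod _).trans ?_
  rw [Multiset.map_map]
  simpa using Multiset.sum_le_card_nsmul (S.map (totalDegree ∘ pencil u v)) _ (by
    simp only [Multiset.mem_map]
    rintro _ ⟨s, -, rfl⟩
    exact totalDegree_pencil_le u v s)

theorem isRelPrime_homogenize (huv : IsRelPrime u v) {m : ℕ} {c e : K[X]} (hc : c ≠ 0)
    (he : e ≠ 0) (hce : IsCoprime c e) (hm : max c.natDegree e.natDegree = m) :
    IsRelPrime (homogenize u v m c) (homogenize u v m e) := by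
  have hunit {w : K[X]} (hw : w ≠ 0) : IsUnit (C w.leadingCoeff : MvPolynomial (Fin n) K) :=
    (isUnit_iff_ne_zero.mpr (Polynomial.leadingCoeff_ne_zero.mpr hw)).map C
  rw [homogenize, homogenize, isRelPrime_mul_unit_left_left (hunit hc),
    isRelPrime_mul_unit_left_right (hunit he)]
  refine IsRelPrime.multiset_prod_left fun x hx =>
    (IsRelPrime.multiset_prod_left fun y hy => ?_).symm
  obtain ⟨s, hs, rfl⟩ := Multiset.mem_map.mp hx
  obtain ⟨s', hs', rfl⟩ := Multiset.mem_map.mp hy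
  exact isRelPrime_pencil huv fun h => not_mem_projRoots_of_isCoprime hce hm hs (h ▸ hs')

variable [IsAlgClosed K]

theorem algebraMap_homogenize (hv : v ≠ 0) {m : ℕ} {w : K[X]} (hw : w.natDegree ≤ m) :
    algebraMap _ (Lf n K) (homogenize u v m w) =
      algebraMap _ _ v ^ m * w.eval₂ (ratι n K) (algebraMap _ _ u / algebraMap _ _ v) := by
  set Φ := algebraMap (MvPolynomial (Fin n) K) (Lf n K)
  set g := Φ u / Φ v
  have hΦv : Φ v ≠ 0 := (map_ne_zero_iff Φ (IsFractionRing.injective _ _)).mpr hv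
  have hroot (r : K) : Φ (pencil u v (some r)) = Φ v * (g - ratι n K r) := by
    simp only [pencil, map_sub, map_mul, g]
    field_simp
    rw [mul_comm]
    rfl
  have hw' : w.eval₂ (ratι n K) g =
      ratι n K w.leadingCoeff * (w.roots.map fun r => g - ratι n K r).prod := by
    conv_lhs => rw [← Polynomial.C_leadingCoeff_mul_prod_multiset_X_sub_C
      (IsAlgClosed.card_roots_eq_natDegree (p := w))]
    simp [Polynomial.eval₂_multiset_prod, Multiset.map_map]
  rw [hw', homogenize, projRoots, map_mul, map_multiset_prod, Multiset.map_map, Multiset.map_add,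
    Multiset.prod_add, Multiset.map_replicate, Multiset.prod_replicate, Multiset.map_map]
  have hprod : (w.roots.map ((Φ ∘ pencil u v) ∘ some)).prod =
      Φ v ^ w.natDegree * (w.roots.map fun r => g - ratι n K r).prod := by
    rw [show (Φ ∘ pencil u v) ∘ some = fun r => Φ v * (g - ratι n K r) from funext hroot,
      Multiset.prod_map_mul, Multiset.map_const',
      Multiset.prod_replicate, IsAlgClosed.card_roots_eq_natDegree]
  rw [Function.comp_apply, hprod, ← Nat.sub_add_cancel hw, Nat.add_sub_cancel, pow_add]
  simp only [pencil, ratι, RingHom.comp_apply]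
  ring

theorem homogenize_sub_C_mul (hv : v ≠ 0) {m : ℕ} {a b : K[X]} (ha : a.natDegree ≤ m)
    (hb : b.natDegree ≤ m) (l : K) :
    homogenize u v m (a - Polynomial.C l * b) = homogenize u v m a - C l * homogenize u v m b := by
  have hab : (a - Polynomial.C l * b).natDegree ≤ m :=
    (Polynomial.natDegree_sub_le _ _).trans
      (max_le ha ((Polynomial.natDegree_C_mul_le l b).trans hb))
  apply IsFractionRing.injective (MvPolynomial (Fin n) K) (Lf n K)
  rw [algebraMap_homogenize hv hab, map_sub, map_mul, algebraMap_homogenize hv ha,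
    algebraMap_homogenize hv hb, Polynomial.eval₂_sub, Polynomial.eval₂_mul, Polynomial.eval₂_C]
  simp only [ratι, RingHom.comp_apply]
  ring

theorem associated_sub_C_mul_homogenize {p q : MvPolynomial (Fin n) K} (hpq : IsRelPrime p q)
    (huv : IsRelPrime u v) (hv : v ≠ 0) {m : ℕ} {a b : K[X]} (hab : IsCoprime a b)
    (hm : max a.natDegree b.natDegree = m) (hm0 : 0 < m)
    (hcross : p * homogenize u v m b = q * homogenize u v m a) (l : K) :
    Associated (p - C l * q) (homogenize u v m (a - Polynomial.C l * b)) := by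
  have hcm := Polynomial.max_natDegree_sub_C_mul a b l
  have hcb : IsCoprime (a - Polynomial.C l * b) b := IsCoprime.sub_mul_right_left_iff.mpr hab
  refine associated_of_mul_eq_mul (IsRelPrime.sub_mul_right_left_iff.mpr hpq)
    (isRelPrime_homogenize huv (Polynomial.ne_zero_of_isCoprime hcb (by rwa [hcm, hm]))
      (Polynomial.ne_zero_of_isCoprime hab.symm (by rwa [max_comm, hm])) hcb (hcm.trans hm)) ?_
  rw [homogenize_sub_C_mul hv (hm ▸ le_max_left _ _) (hm ▸ le_max_right _ _)]
  linear_combination hcross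

theorem mul_le_totalDegree_homogenize {m : ℕ} {w : K[X]} (hw0 : w ≠ 0) (hw : w.natDegree ≤ m)
    (h : ∀ s ∈ projRoots m w, max u.totalDegree v.totalDegree ≤ (pencil u v s).totalDegree) :
    m * max u.totalDegree v.totalDegree ≤ (homogenize u v m w).totalDegree := by
  rcases Nat.eq_zero_or_pos (max u.totalDegree v.totalDegree) with hΔ | hΔ
  · simp [hΔ]
  have h0 : (0 : MvPolynomial (Fin n) K) ∉ (projRoots m w).map (pencil u v) := by
    rintro hmem
    obtain ⟨s, hs, hs0⟩ := Multiset.mem_map.mp hmem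
    have := h s hs
    rw [hs0, totalDegree_zero] at this
    omega
  have hC : (C w.leadingCoeff : MvPolynomial (Fin n) K) ≠ 0 :=
    C_ne_zero.mpr (Polynomial.leadingCoeff_ne_zero.mpr hw0)
  rw [homogenize, totalDegree_mul_of_isDomain hC (Multiset.prod_ne_zero h0), totalDegree_C,
    zero_add, totalDegree_multiset_prod_of_isDomain h0, Multiset.map_map]
  conv_lhs => rw [← card_projRoots hw]
  simpa using Multiset.card_nsmul_le_sum (s := (projRoots m w).map (totalDegree ∘ pencil u v))
    (a := max u.totalDegree v.totalDegree) (by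
      simp only [Multiset.mem_map]
      rintro _ ⟨s, hs, rfl⟩
      exact h s hs)

theorem mul_le_max_totalDegree_homogenize {m : ℕ} {a b : K[X]} (ha : a ≠ 0) (hb : b ≠ 0)
    (hab : IsCoprime a b) (hm : max a.natDegree b.natDegree = m) :
    m * max u.totalDegree v.totalDegree ≤
      max (homogenize u v m a).totalDegree (homogenize u v m b).totalDegree := by
  by_cases hexc : ∃ s₀, (pencil u v s₀).totalDegree < max u.totalDegree v.totalDegree
  · obtain ⟨s₀, hs₀⟩ := hexc
    have hge (s : Option K) (hs : s ≠ s₀) :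
        max u.totalDegree v.totalDegree ≤ (pencil u v s).totalDegree := by
      have := le_max_totalDegree_pencil (u := u) (v := v) hs
      omega
    by_cases ha₀ : s₀ ∈ projRoots m a
    · have hb₀ := not_mem_projRoots_of_isCoprime hab hm ha₀
      exact le_max_of_le_right (mul_le_totalDegree_homogenize hb (hm ▸ le_max_right _ _)
        fun s hs => hge s (ne_of_mem_of_not_mem hs hb₀))
    · exact le_max_of_le_left (mul_le_totalDegree_homogenize ha (hm ▸ le_max_left _ _)
        fun s hs => hge s (ne_of_mem_of_not_mem hs ha₀))
  · simp only [not_exists, not_lt] at hexc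
    exact le_max_of_le_left (mul_le_totalDegree_homogenize ha (hm ▸ le_max_left _ _)
      fun s _ => hexc s)

theorem not_irreducible_homogenize {m : ℕ} {c : K[X]} (hm : 2 ≤ m) (hc : c.natDegree ≤ m)
    (hdeg : m * max u.totalDegree v.totalDegree ≤ (homogenize u v m c).totalDegree) :
    ¬ Irreducible (homogenize u v m c) := by
  intro hirr
  set Δ := max u.totalDegree v.totalDegree
  obtain ⟨s, S, hsS⟩ : ∃ s S, projRoots m c = s ::ₘ S := by
    obtain ⟨s, hs⟩ := Multiset.card_pos_iff_exists_mem.mp (by rw [card_projRoots hc]; omega)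
    exact ⟨s, Multiset.exists_cons_of_mem hs⟩
  have hcard : Multiset.card S + 1 = m := by
    rw [← card_projRoots hc, hsS, Multiset.card_cons]
  set x := pencil u v s
  set y := C c.leadingCoeff * (S.map (pencil u v)).prod
  have hsplit : homogenize u v m c = x * y := by
    rw [homogenize, hsS, Multiset.map_cons, Multiset.prod_cons]
    ring
  have hx : x.totalDegree ≤ Δ := totalDegree_pencil_le u v s
  have hy : y.totalDegree ≤ Multiset.card S * Δ := by
    refine (totalDegree_mul _ _).trans ?_
    rw [totalDegree_C, zero_add]
    exact totalDegree_prod_pencil_le u v S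
  rw [hsplit] at hirr hdeg
  obtain ⟨hx0, hy0⟩ := mul_ne_zero_iff.mp hirr.ne_zero
  have hxy := totalDegree_mul_of_isDomain hx0 hy0
  have hSΔ : Δ ≤ Multiset.card S * Δ := Nat.le_mul_of_pos_left Δ (by omega)
  rw [← hcard, add_one_mul] at hdeg
  have hΔ : Δ = 0 := by
    rcases hirr.isUnit_or_isUnit rfl with hu | hu <;>
      have := (isUnit_iff_totalDegree_of_isReduced.mp hu).2 <;> omega
  rw [hΔ, mul_zero] at hy
  exact not_irreducible_of_totalDegree_eq_zero (by omega) hirr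

end Homogenize

theorem stmt0_general {K : Type*} [Field K] [IsAlgClosed K] (n : ℕ)
    (p q : MvPolynomial (Fin n) K) (hpq : IsRelPrime p q) (hq : q ≠ 0)
    (hcomp : IsComposite (algebraMap (MvPolynomial (Fin n) K) (Lf n K) p /
      algebraMap (MvPolynomial (Fin n) K) (Lf n K) q)) :
    ∀ l : Option K, (pencil p q l).totalDegree = max p.totalDegree q.totalDegree →
      ¬ Irreducible (pencil p q l) := by
  intro l hdeg hirr
  obtain ⟨a, b, g, hab, hm2, hEb, hf⟩ := hcomp
  obtain ⟨u, v, huv, rfl⟩ := IsFractionRing.exists_reduced_fraction (MvPolynomial (Fin n) K) g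
  rw [IsFractionRing.mk'_eq_div] at hEb hf
  have hv : (v : MvPolynomial (Fin n) K) ≠ 0 := nonZeroDivisors.coe_ne_zero v
  set m := max a.natDegree b.natDegree
  have hcross : p * homogenize u v m b = q * homogenize u v m a := by
    apply IsFractionRing.injective (MvPolynomial (Fin n) K) (Lf n K)
    rw [map_mul, map_mul, algebraMap_homogenize hv (le_max_right _ _),
      algebraMap_homogenize hv (le_max_left _ _)]
    rw [div_eq_div_iff ((map_ne_zero_iff _ (IsFractionRing.injective _ _)).mpr hq) hEb] at hf
    linear_combination (algebraMap _ (Lf n K) (v : MvPolynomial (Fin n) K) ^ m) * hf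
  have ha0 := Polynomial.ne_zero_of_isCoprime hab (by omega)
  have hb0 := Polynomial.ne_zero_of_isCoprime hab.symm (by rw [max_comm]; omega)
  have hpA := associated_of_mul_eq_mul hpq (isRelPrime_homogenize huv ha0 hb0 hab rfl) hcross
  have hqB := associated_of_mul_eq_mul hpq.symm
    (isRelPrime_homogenize huv hb0 ha0 hab.symm (max_comm _ _)) hcross.symm
  obtain ⟨c, hcm, hPc⟩ : ∃ c : K[X], c.natDegree ≤ m ∧
      Associated (pencil p q l) (homogenize u v m c) := by
    cases l with
    | none => exact ⟨b, le_max_right _ _, hqB⟩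
    | some l => exact ⟨_, (le_max_left _ _).trans (Polynomial.max_natDegree_sub_C_mul a b l).le,
        associated_sub_C_mul_homogenize hpq huv hv hab rfl (by omega) hcross l⟩
  refine not_irreducible_homogenize hm2 hcm ?_ (hPc.irreducible hirr)
  rw [← hPc.totalDegree_eq, hdeg, hpA.totalDegree_eq, hqB.totalDegree_eq]
  exact mul_le_max_totalDegree_homogenize ha0 hb0 hab rfl

theorem stmt0 {K : Type*} [Field K] [IsAlgClosed K] (n : ℕ) (hn : 2 ≤ n)
    (p q : MvPolynomial (Fin n) K) (hpq : IsRelPrime p q) (hq : q ≠ 0)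
    (hcomp : IsComposite (algebraMap (MvPolynomial (Fin n) K) (Lf n K) p /
      algebraMap (MvPolynomial (Fin n) K) (Lf n K) q)) :
    ∀ l : Option K, (pencil p q l).totalDegree = max p.totalDegree q.totalDegree →
      ¬ Irreducible (pencil p q l) :=
  stmt0_general n p q hpq hq hcomp

end
end

section
/- Let K be an algebraically closed field of characteristic 0 and f = p/q ∈ K(x,y) with gcd(p,q) = 1. If g ∈ K(x,y) is algebraically dependent with f over K, then for all but finitely many λ ∈ K ∪ {∞}, g is constant on every irreducible component of the curve (p − λq = 0). -/
/-!
Let `P ≠ 0` with `P(p/q, u/v) = 0`. For an irreducible factor `F` of `p - λq` not dividing `v`,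
both fractions specialize to the residue field `κ(F) = Frac(K[x,y]/(F))`, where `p/q` becomes the
constant `λ`; so the image of `u/v` is a root of `P(λ, Y) ∈ K[Y]`. Unless `P(λ, Y) = 0`, it is then
algebraic over the algebraically closed `K`, hence a constant `c`, i.e. `F ∣ u - c v`. The
excluded `λ` are finitely many: `P(λ, Y) = 0` only for finitely many `λ` since `P ≠ 0`, and each
prime factor of `v` divides at most one member of the pencil, as `p` and `q` are coprime.
-/

open MvPolynomial

noncomputable section
variable {K : Type*} [Field K]

def constOn {K : Type*} [Field K] (u v F : MvPolynomial (Fin 2) K) : Prop :=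
  ∃ c : K, F ∣ (u - MvPolynomial.C c * v) ∧ ¬ F ∣ v

section Pencil

variable {n : ℕ} {p q F : MvPolynomial (Fin n) K}

lemma dvd_left_of_dvd_pencil_some {l : K} (h : F ∣ pencil p q (some l)) (hq : F ∣ q) : F ∣ p := by
  simpa [pencil] using dvd_add h (hq.mul_left (C l))

lemma dvd_left_and_dvd_right_of_dvd_pencil_of_ne {l₁ l₂ : Option K} (hne : l₁ ≠ l₂)
    (h₁ : F ∣ pencil p q l₁) (h₂ : F ∣ pencil p q l₂) : F ∣ p ∧ F ∣ q := by
  match l₁, l₂, hne with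
  | none, none, hne => exact absurd rfl hne
  | none, some _, _ => exact ⟨dvd_left_of_dvd_pencil_some h₂ h₁, h₁⟩
  | some _, none, _ => exact ⟨dvd_left_of_dvd_pencil_some h₁ h₂, h₂⟩
  | some a, some b, hne =>
    have hq : F ∣ q := by
      have hab : IsUnit (C (b - a) : MvPolynomial (Fin n) K) :=
        (sub_ne_zero.mpr fun h => hne (by rw [h])).isUnit.map C
      refine hab.dvd_mul_left.mp ?_
      convert dvd_sub h₁ h₂ using 1
      simp only [pencil, C_sub]
      ring
    exact ⟨dvd_left_of_dvd_pencil_some h₁ hq, hq⟩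

lemma subsingleton_setOf_dvd_pencil (hpq : IsRelPrime p q) (hF : ¬ IsUnit F) :
    {l | F ∣ pencil p q l}.Subsingleton := fun _ h₁ _ h₂ => by
  by_contra hne
  obtain ⟨hp, hq⟩ := dvd_left_and_dvd_right_of_dvd_pencil_of_ne hne h₁ h₂
  exact hF (hpq hp hq)

lemma finite_setOf_dvd_pencil_of_dvd (hpq : IsRelPrime p q) {v : MvPolynomial (Fin n) K}
    (hv : v ≠ 0) :
    {l | ∃ F, Irreducible F ∧ F ∣ v ∧ F ∣ pencil p q l}.Finite := by
  classical
  refine ((UniqueFactorizationMonoid.factors v).toFinset.finite_toSet.biUnion fun G hG =>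
    (subsingleton_setOf_dvd_pencil (F := G) hpq ?_).finite).subset ?_
  · exact (UniqueFactorizationMonoid.irreducible_of_factor G
      (Multiset.mem_toFinset.mp hG)).not_isUnit
  · rintro l ⟨F, hF, hFv, hFl⟩
    obtain ⟨G, hG, hFG⟩ := UniqueFactorizationMonoid.exists_mem_factors_of_dvd hv hF hFv
    exact Set.mem_biUnion (Multiset.mem_toFinset.mpr hG) (hFG.symm.dvd.trans hFl)

end Pencil

section Specialization

variable {A R : Type*} [CommRing A] [CommRing R] [Algebra A R] [IsDomain R]
  (𝔭 : Ideal R) [𝔭.IsPrime]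

/-- The fractions `x i / y i` lie in the local ring `R_𝔭`, which embeds into `Frac R` and maps
onto the residue field. -/
lemma aeval_residueField_eq_zero_of_aeval_fractionRing_eq_zero {ι : Type*}
    {P : MvPolynomial ι A} {x y : ι → R} (hy : ∀ i, y i ∉ 𝔭)
    (hP : aeval (fun i => algebraMap R (FractionRing R) (x i) /
      algebraMap R (FractionRing R) (y i)) P = 0) :
    aeval (fun i => algebraMap R 𝔭.ResidueField (x i) /
      algebraMap R 𝔭.ResidueField (y i)) P = 0 := by
  let Rₚ := Localization.AtPrime 𝔭
  let z : ι → Rₚ := fun i => IsLocalization.mk' Rₚ (x i) (⟨y i, hy i⟩ : 𝔭.primeCompl)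
  have hne : ∀ s : 𝔭.primeCompl, (s : R) ≠ 0 := fun s h => s.2 (h ▸ 𝔭.zero_mem)
  let toFrac : Rₚ →ₐ[A] FractionRing R :=
    IsLocalization.liftAlgHom (M := 𝔭.primeCompl) (f := IsScalarTower.toAlgHom A R _)
      fun s => (IsFractionRing.to_map_ne_zero_of_mem_nonZeroDivisors
        (mem_nonZeroDivisors_of_ne_zero (hne s))).isUnit
  have htoFrac : ∀ i, toFrac (z i) = algebraMap R _ (x i) / algebraMap R _ (y i) := fun i => by
    simp only [toFrac, z, IsLocalization.coe_liftAlgHom, IsLocalization.lift_mk'_spec]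
    exact (mul_div_cancel₀ _ (IsFractionRing.to_map_ne_zero_of_mem_nonZeroDivisors
      (mem_nonZeroDivisors_of_ne_zero (hne ⟨y i, hy i⟩)))).symm
  have hres : ∀ i, algebraMap Rₚ 𝔭.ResidueField (z i) =
      algebraMap R _ (x i) / algebraMap R _ (y i) := fun i => by
    refine eq_div_of_mul_eq (Ideal.algebraMap_residueField_eq_zero.not.mpr (hy i)) ?_
    rw [IsScalarTower.algebraMap_apply R Rₚ 𝔭.ResidueField (y i), ← map_mul,
      IsLocalization.mk'_spec, ← IsScalarTower.algebraMap_apply]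
  have hinj : Function.Injective toFrac := by
    refine (IsLocalization.lift_injective_iff _).mpr fun a b => ?_
    exact ((IsLocalization.injective Rₚ 𝔭.primeCompl_le_nonZeroDivisors).eq_iff).trans
      (IsFractionRing.injective R (FractionRing R)).eq_iff.symm
  have hz : aeval z P = 0 := hinj <| by
    rw [map_zero, ← AlgHom.comp_apply, comp_aeval]
    simpa only [htoFrac] using hP
  have h := congrArg (IsScalarTower.toAlgHom A Rₚ 𝔭.ResidueField) hz
  rw [map_zero, ← AlgHom.comp_apply, comp_aeval] at h
  simpa only [IsScalarTower.coe_toAlgHom', hres] using h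

end Specialization

lemma exists_sub_algebraMap_mul_mem_of_aeval_eq_zero [IsAlgClosed K] {R : Type*} [CommRing R]
    [Algebra K R] {𝔭 : Ideal R} [𝔭.IsPrime] {u v : R} (hv : v ∉ 𝔭) {Q : Polynomial K}
    (hQ : Q ≠ 0)
    (hQu : Polynomial.aeval (algebraMap R 𝔭.ResidueField u / algebraMap R 𝔭.ResidueField v) Q = 0) :
    ∃ c : K, u - algebraMap K R c * v ∈ 𝔭 := by
  obtain ⟨c, hc⟩ := (IsAlgClosed.splits Q).mem_range_of_isRoot hQ
    (i := algebraMap K 𝔭.ResidueField) (by rwa [Polynomial.IsRoot, Polynomial.eval_map_algebraMap])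
  refine ⟨c, Ideal.algebraMap_residueField_eq_zero.mp ?_⟩
  rw [map_sub, map_mul, ← IsScalarTower.algebraMap_apply, hc,
    div_mul_cancel₀ _ (Ideal.algebraMap_residueField_eq_zero.not.mpr hv), sub_self]

lemma aeval_aeval_C_X {S : Type*} [CommRing S] [Algebra K S] (P : MvPolynomial (Fin 2) K) (c : K)
    (s : S) : Polynomial.aeval s (aeval ![Polynomial.C c, Polynomial.X] P) =
      aeval ![algebraMap K S c, s] P := by
  rw [← AlgHom.comp_apply, comp_aeval]
  congr
  funext i
  fin_cases i <;> simp

lemma finite_setOf_aeval_C_X_eq_zero {P : MvPolynomial (Fin 2) K} (hP : P ≠ 0) :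
    {c : K | aeval ![Polynomial.C c, Polynomial.X] P = 0}.Finite := by
  by_contra hinf
  have : Infinite K := not_finite_iff_infinite.mp fun _ => hinf (Set.toFinite _)
  obtain ⟨S₀, hS₀, hcard₀⟩ := Set.Infinite.exists_subset_card_eq hinf (P.degreeOf 0 + 1)
  obtain ⟨S₁, hcard₁⟩ := Infinite.exists_subset_card_eq K (P.degreeOf 1 + 1)
  refine hP (eq_zero_of_eval_zero_at_prod_finset P ![S₀, S₁] (fun i => ?_) fun x hx => ?_)
  · fin_cases i <;> simp [hcard₀, hcard₁]
  · have hx₀ : aeval ![Polynomial.C (x 0), Polynomial.X] P = 0 := hS₀ (hx 0)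
    have hx' : ![x 0, x 1] = x := by
      funext i
      fin_cases i <;> rfl
    simpa [hx₀, hx', coe_aeval_eq_eval] using (aeval_aeval_C_X P (x 0) (x 1)).symm

lemma fun_div_vecCons_two {R L : Type*} [Div L] (φ : R → L) (a b c d : R) :
    (fun i => φ (![a, b] i) / φ (![c, d] i)) = ![φ a / φ c, φ b / φ d] :=
  (FinVec.etaExpand_eq _).symm

lemma exists_dvd_sub_C_mul_of_dvd_pencil_some [IsAlgClosed K] {n : ℕ}
    {p q u v F : MvPolynomial (Fin n) K} {P : MvPolynomial (Fin 2) K} {l : K}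
    (hP : aeval ![algebraMap _ (Lf n K) p / algebraMap _ (Lf n K) q,
      algebraMap _ (Lf n K) u / algebraMap _ (Lf n K) v] P = 0)
    (hPl : aeval ![Polynomial.C l, Polynomial.X] P ≠ 0) (hF : Irreducible F)
    (hFl : F ∣ pencil p q (some l)) (hFq : ¬ F ∣ q) (hFv : ¬ F ∣ v) :
    ∃ c : K, F ∣ u - C c * v := by
  let 𝔭 := Ideal.span {F}
  have : 𝔭.IsPrime := (Ideal.span_singleton_prime hF.ne_zero).mpr hF.prime
  have hmem : ∀ a, a ∈ 𝔭 ↔ F ∣ a := fun a => Ideal.mem_span_singleton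
  have hq : algebraMap _ 𝔭.ResidueField q ≠ 0 :=
    Ideal.algebraMap_residueField_eq_zero.not.mpr ((hmem q).not.mpr hFq)
  have hspec : aeval ![algebraMap _ 𝔭.ResidueField p / algebraMap _ _ q,
      algebraMap _ 𝔭.ResidueField u / algebraMap _ _ v] P = 0 := by
    have h := aeval_residueField_eq_zero_of_aeval_fractionRing_eq_zero 𝔭 (x := ![p, u])
      (y := ![q, v]) (fun i => by fin_cases i <;> simpa [hmem]) (by
        rw [fun_div_vecCons_two]; exact hP)
    rwa [fun_div_vecCons_two] at h
  have hpq : algebraMap _ 𝔭.ResidueField p / algebraMap _ _ q = algebraMap K _ l := by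
    rw [div_eq_iff hq, ← sub_eq_zero, IsScalarTower.algebraMap_apply K (MvPolynomial (Fin n) K),
      ← map_mul, ← map_sub, Ideal.algebraMap_residueField_eq_zero, hmem, algebraMap_eq]
    exact hFl
  obtain ⟨c, hc⟩ := exists_sub_algebraMap_mul_mem_of_aeval_eq_zero (u := u)
    ((hmem v).not.mpr hFv) hPl (by rwa [aeval_aeval_C_X, ← hpq])
  exact ⟨c, (hmem _).mp hc⟩

theorem stmt9_general {K : Type*} [Field K] [IsAlgClosed K]
    (p q u v : MvPolynomial (Fin 2) K) (hpq : IsRelPrime p q)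
    (hv : v ≠ 0)
    (hdep : ¬ AlgebraicIndependent K
      ![algebraMap (MvPolynomial (Fin 2) K) (Lf 2 K) p /
          algebraMap (MvPolynomial (Fin 2) K) (Lf 2 K) q,
        algebraMap (MvPolynomial (Fin 2) K) (Lf 2 K) u /
          algebraMap (MvPolynomial (Fin 2) K) (Lf 2 K) v]) :
    {l : Option K | ∃ F, Irreducible F ∧ F ∣ pencil p q l ∧ ¬ constOn u v F}.Finite := by
  obtain ⟨P, hP, hP0⟩ := not_forall₂.mp (mt algebraicIndependent_iff.mpr hdep)
  refine ((((finite_setOf_aeval_C_X_eq_zero hP0).image some).union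
    (finite_setOf_dvd_pencil_of_dvd hpq hv)).insert none).subset ?_
  rintro (_ | l) ⟨F, hF, hFl, hnc⟩
  · exact Set.mem_insert _ _
  refine Set.mem_insert_of_mem _ ?_
  by_cases hFv : F ∣ v
  · exact Or.inr ⟨F, hF, hFv, hFl⟩
  refine Or.inl ⟨l, ?_, rfl⟩
  by_contra hPl
  have hFq : ¬ F ∣ q := fun hq => hF.not_isUnit (hpq (dvd_left_of_dvd_pencil_some hFl hq) hq)
  obtain ⟨c, hc⟩ := exists_dvd_sub_C_mul_of_dvd_pencil_some hP hPl hF hFl hFq hFv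
  exact hnc ⟨c, hc, hFv⟩

theorem stmt9 {K : Type*} [Field K] [IsAlgClosed K] [CharZero K]
    (p q u v : MvPolynomial (Fin 2) K) (hpq : IsRelPrime p q) (hq : q ≠ 0)
    (huv : IsRelPrime u v) (hv : v ≠ 0)
    (hdep : ¬ AlgebraicIndependent K
      ![algebraMap (MvPolynomial (Fin 2) K) (Lf 2 K) p /
          algebraMap (MvPolynomial (Fin 2) K) (Lf 2 K) q,
        algebraMap (MvPolynomial (Fin 2) K) (Lf 2 K) u /
          algebraMap (MvPolynomial (Fin 2) K) (Lf 2 K) v]) :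
    {l : Option K | ∃ F, Irreducible F ∧ F ∣ pencil p q l ∧ ¬ constOn u v F}.Finite :=
  stmt9_general p q u v hpq hv hdep

end
end

section
/- Let K be an algebraically closed field of characteristic 0 and f = p/q ∈ K(x,y) with gcd(p,q) = 1. If g ∈ K(x,y) is constant on infinitely many irreducible components of curves (p − λq = 0), λ ranging over K ∪ {∞}, then D_f(g) = 0, i.e., f and g are algebraically dependent. -/
/-!
If `F` is an irreducible component of a curve `p - λq = 0` on which `u / v` is constant, then modulo `F`
both `∇(p / q)` and `∇(u / v)` are multiples of `∇F`, so `F` divides the numerator `D` of the Jacobian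
`D_{p/q}(u/v)`. Since `p` and `q` are coprime, distinct members of the pencil are coprime, so distinct
`λ` give non-associated `F`. A nonzero `D` has only finitely many irreducible factors, hence `D = 0`.
-/

open MvPolynomial

noncomputable section
variable {K : Type*} [Field K]

theorem dvd_mul_sub_mul_of_dvd_sub_mul {R : Type*} [CommRing R] {F A₀ A₁ B₀ B₁ G₀ G₁ w z : R}
    (hA₀ : F ∣ A₀ - w * G₀) (hA₁ : F ∣ A₁ - w * G₁) (hB₀ : F ∣ B₀ - z * G₀)
    (hB₁ : F ∣ B₁ - z * G₁) : F ∣ A₀ * B₁ - A₁ * B₀ := by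
  have h : A₀ * B₁ - A₁ * B₀ = ((A₀ - w * G₀) * B₁ + w * G₀ * (B₁ - z * G₁))
      - ((A₁ - w * G₁) * B₀ + w * G₁ * (B₀ - z * G₀)) := by ring
  rw [h]
  exact dvd_sub (dvd_add (hA₀.mul_right _) (hB₁.mul_left _))
    (dvd_add (hA₁.mul_right _) (hB₀.mul_left _))

open Function in
theorem UniqueFactorizationMonoid.finite_setOf_exists_irreducible_dvd {α ι : Type*}
    [CommMonoidWithZero α] [UniqueFactorizationMonoid α] {f : ι → α}
    (hf : Pairwise (IsRelPrime on f)) {D : α} (hD : D ≠ 0) :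
    {l | ∃ F, Irreducible F ∧ F ∣ f l ∧ F ∣ D}.Finite := by
  classical
  have hsub : {l | ∃ F, Irreducible F ∧ F ∣ f l ∧ F ∣ D}
      ⊆ ⋃ g ∈ (factors D).toFinset, {l | g ∣ f l} := by
    rintro l ⟨F, hF, hFl, hFD⟩
    obtain ⟨g, hg, hFg⟩ := exists_mem_factors_of_dvd hD hF hFD
    exact Set.mem_biUnion (Multiset.mem_toFinset.mpr hg) (hFg.symm.dvd.trans hFl)
  refine Set.Finite.subset (Set.Finite.biUnion (Finset.finite_toSet _) fun g hg => ?_) hsub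
  refine Set.Subsingleton.finite fun l hl l' hl' => by_contra fun hne => ?_
  exact (irreducible_of_factor g (Multiset.mem_toFinset.mp hg)).not_isUnit (hf hne hl hl')

open Function in
theorem pairwise_isRelPrime_pencil {n : ℕ} {p q : MvPolynomial (Fin n) K} (hpq : IsRelPrime p q) :
    Pairwise (IsRelPrime on pencil p q) := by
  have dvd_p {d : MvPolynomial (Fin n) K} (c : K) (hq : d ∣ q) (h : d ∣ pencil p q (some c)) :
      d ∣ p := by
    simpa [pencil] using dvd_add h (hq.mul_left (C c))
  rintro (_ | l) (_ | l') hne d hd hd'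
  · exact absurd rfl hne
  · exact hpq (dvd_p l' hd hd') hd
  · exact hpq (dvd_p l hd' hd) hd'
  · have hl : l - l' ≠ 0 := sub_ne_zero.mpr fun h => hne (congrArg some h)
    have hq : d ∣ q := by
      have h : pencil p q (some l') - pencil p q (some l) = C (l - l') * q := by
        simp only [pencil, map_sub]; ring
      have hunit : IsUnit (C (l - l') : MvPolynomial (Fin n) K) := hl.isUnit.map C
      exact hunit.dvd_mul_left.mp (h ▸ dvd_sub hd' hd)
    exact hpq (dvd_p l hq hd) hq

section DerivNum

variable {σ R : Type*} [CommRing R]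

/-- The numerator of `∂ᵢ (a / b)`. -/
def derivNum (i : σ) (a b : MvPolynomial σ R) : MvPolynomial σ R :=
  b * pderiv i a - a * pderiv i b

theorem derivNum_swap (i : σ) (a b : MvPolynomial σ R) : derivNum i b a = -derivNum i a b := by
  simp only [derivNum]; ring

/-- On the curve `F = 0` where `a / b` is constant, `∇(a / b)` is normal to the curve. -/
theorem exists_dvd_derivNum_sub_mul_pderiv {a b F : MvPolynomial σ R} {c : R}
    (h : F ∣ a - C c * b) : ∃ w, ∀ i, F ∣ derivNum i a b - w * pderiv i F := by
  obtain ⟨k, hk⟩ := h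
  obtain rfl : a = C c * b + F * k := by linear_combination hk
  refine ⟨b * k, fun i => ⟨b * pderiv i k - k * pderiv i b, ?_⟩⟩
  simp only [derivNum, map_add, pderiv_mul, pderiv_C, zero_mul, zero_add]
  ring

theorem exists_dvd_derivNum_sub_mul_pderiv_of_dvd_pencil {n : ℕ}
    {p q F : MvPolynomial (Fin n) K} {l : Option K} (h : F ∣ pencil p q l) :
    ∃ w, ∀ i, F ∣ derivNum i p q - w * pderiv i F := by
  cases l with
  | some c => exact exists_dvd_derivNum_sub_mul_pderiv h
  | none =>
    obtain ⟨w, hw⟩ := exists_dvd_derivNum_sub_mul_pderiv (c := 0) (a := q) (b := p)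
      (by simpa [pencil] using h)
    refine ⟨-w, fun i => ?_⟩
    have h' : derivNum i p q - -w * pderiv i F = -(derivNum i q p - w * pderiv i F) := by
      rw [derivNum_swap]; ring
    exact h' ▸ (hw i).neg_right

end DerivNum

theorem dvd_jacobian_of_dvd_pencil_of_constOn {p q u v F : MvPolynomial (Fin 2) K}
    {l : Option K} (hF : F ∣ pencil p q l) (hc : constOn u v F) :
    F ∣ derivNum 0 p q * derivNum 1 u v - derivNum 1 p q * derivNum 0 u v := by
  obtain ⟨w, hw⟩ := exists_dvd_derivNum_sub_mul_pderiv_of_dvd_pencil hF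
  obtain ⟨c, hc, -⟩ := hc
  obtain ⟨z, hz⟩ := exists_dvd_derivNum_sub_mul_pderiv hc
  exact dvd_mul_sub_mul_of_dvd_sub_mul (hw 0) (hw 1) (hz 0) (hz 1)

theorem stmt10_general {K : Type*} [Field K]
    (p q u v : MvPolynomial (Fin 2) K) (hpq : IsRelPrime p q)
    (hinf : {l : Option K | ∃ F, Irreducible F ∧ F ∣ pencil p q l ∧ constOn u v F}.Infinite) :
    jacZero p q u v := by
  show derivNum 0 p q * derivNum 1 u v = derivNum 1 p q * derivNum 0 u v
  by_contra hD
  refine hinf ((UniqueFactorizationMonoid.finite_setOf_exists_irreducible_dvd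
    (pairwise_isRelPrime_pencil hpq) (sub_ne_zero.mpr hD)).subset ?_)
  rintro l ⟨F, hF, hFl, hc⟩
  exact ⟨F, hF, hFl, dvd_jacobian_of_dvd_pencil_of_constOn hFl hc⟩

theorem stmt10 {K : Type*} [Field K] [IsAlgClosed K] [CharZero K]
    (p q u v : MvPolynomial (Fin 2) K) (hpq : IsRelPrime p q) (hq : q ≠ 0)
    (huv : IsRelPrime u v) (hv : v ≠ 0)
    (hinf : {l : Option K | ∃ F, Irreducible F ∧ F ∣ pencil p q l ∧ constOn u v F}.Infinite) :
    jacZero p q u v :=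
  stmt10_general p q u v hpq hinf

end
end

section
/- Let K be an algebraically closed field of characteristic 0, f = p/q ∈ K(x,y) non-composite with gcd(p,q)=1, and suppose g = ∏ F_{i,j}^{m_{i,j}} ∈ K(f), where the F_{i,j} range over all but one irreducible factor of each p − λᵢq (λᵢ ∈ σ(f)) and not all m_{i,j} are zero. Then a contradiction follows; equivalently, no nontrivial monomial in such proper subfamilies of irreducible factors lies in K(f). -/
/-!
An element of `K(f)` is `u(f)/v(f)` with `u, v ∈ K[t]`. Splitting `u` and `v` into linear factors
and clearing the denominators `q`, a relation `∏ F ^ m_F = u(f)/v(f)` becomes an identity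
`M₊ · c V = M₋ · c' U` in `K[x, y]`, where `M₊, M₋` collect the positive and negative exponents and
`U, V` are products of members `p - λq` (and `q`, for `λ = ∞`) of the pencil. As `gcd(p, q) = 1`,
an irreducible factor `H` of a fibre `p - λq` divides no other member of the pencil, so the
multiplicity of `H` in `U` is `k · ord_H (p - λq)`, with `k` independent of `H`. At the factor `G`
of the fibre omitted from the family, which divides neither `M₊` nor `M₋`, this forces the counts
`k` of `U` and `V` to agree; at any member `F` of the family in the same fibre it then gives
`m_F = 0`.
-/

open Polynomial in
theorem Subfield.exists_eval₂_div_of_mem_closure {K L : Type*} [Field K] [Field L] (ι : K →+* L)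
    {f x : L} (hx : x ∈ Subfield.closure (Set.range ι ∪ {f})) :
    ∃ u v : K[X], x = u.eval₂ ι f / v.eval₂ ι f := by
  have hle : Subring.closure (Set.range ι ∪ {f}) ≤ (eval₂RingHom ι f).range := by
    rw [Subring.closure_le]
    rintro _ (⟨c, rfl⟩ | rfl)
    · exact ⟨C c, eval₂_C _ _⟩
    · exact ⟨X, eval₂_X _ _⟩
  obtain ⟨_, hA, _, hB, rfl⟩ := Subfield.mem_closure_iff.mp hx
  obtain ⟨u, rfl⟩ := hle hA
  obtain ⟨v, rfl⟩ := hle hB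
  exact ⟨u, v, rfl⟩

open Polynomial in
theorem Polynomial.Splits.eval₂_div_mul_pow_natDegree {K L : Type*} [Field K] [Field L]
    (ι : K →+* L) {u : K[X]} (hu : u.Splits) {x y : L} (hy : y ≠ 0) :
    u.eval₂ ι (x / y) * y ^ u.natDegree
      = ι u.leadingCoeff * (u.roots.map fun r => x - ι r * y).prod := by
  have heval : u.eval₂ ι (x / y) = ι u.leadingCoeff * (u.roots.map fun r => x / y - ι r).prod := by
    conv_lhs => rw [hu.eq_prod_roots]
    simp [eval₂_multiset_prod, Multiset.map_map]
  rw [heval, hu.natDegree_eq_card_roots, mul_assoc, ← Multiset.prod_replicate,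
    ← Multiset.map_const', ← Multiset.prod_map_mul]
  congr 2
  refine Multiset.map_congr rfl fun r _ => ?_
  field_simp

theorem Prime.not_dvd_finset_prod_pow {α : Type*} [CommMonoidWithZero α] [IsCancelMulZero α]
    {H : α} (hH : Prime H) {S : Finset α} (hS : ∀ F ∈ S, Prime F) (hne : ∀ F ∈ S, ¬Associated H F)
    (e : α → ℕ) : ¬H ∣ ∏ F ∈ S, F ^ e F := by
  intro h
  obtain ⟨F, hF, hdvd⟩ := (hH.dvd_finsetProd_iff _).mp h
  exact hne F hF (hH.associated_of_dvd (hS F hF) (hH.dvd_of_dvd_pow hdvd))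

theorem emultiplicity_finset_prod_pow_of_mem {α : Type*} [CommMonoidWithZero α]
    [IsCancelMulZero α] {S : Finset α} (hS : ∀ F ∈ S, Prime F)
    (hpair : (S : Set α).Pairwise fun a b => ¬Associated a b) {H : α} (hH : H ∈ S)
    (e : α → ℕ) : emultiplicity H (∏ F ∈ S, F ^ e F) = e H := by
  classical
  have hrest : ¬H ∣ ∏ F ∈ S.erase H, F ^ e F :=
    (hS H hH).not_dvd_finset_prod_pow (fun F hF => hS F (Finset.mem_of_mem_erase hF))
      (fun F hF => hpair hH (Finset.mem_of_mem_erase hF) (Finset.ne_of_mem_erase hF).symm) e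
  rw [← Finset.mul_prod_erase S _ hH, emultiplicity_mul (hS H hH),
    emultiplicity_pow_self_of_prime (hS H hH), emultiplicity_eq_zero.mpr hrest, add_zero]

theorem Finset.prod_zpow_eq_prod_pow_toNat_div {ι L : Type*} [CommGroupWithZero L]
    (s : Finset ι) {x : ι → L} (hx : ∀ i ∈ s, x i ≠ 0) (m : ι → ℤ) :
    ∏ i ∈ s, x i ^ m i = (∏ i ∈ s, x i ^ (m i).toNat) / ∏ i ∈ s, x i ^ (-m i).toNat := by
  rw [eq_div_iff (prod_ne_zero_iff.mpr fun i hi => pow_ne_zero _ (hx i hi)),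
    ← prod_mul_distrib]
  refine prod_congr rfl fun i hi => ?_
  rw [← zpow_natCast, ← zpow_natCast, ← zpow_add₀ (hx i hi)]
  congr 1
  omega

open MvPolynomial

noncomputable section
variable {K : Type*} [Field K]

section Pencil

variable {n : ℕ} {p q : MvPolynomial (Fin n) K}

theorem pencil_ne_zero (hpq : IsRelPrime p q) (hq0 : q ≠ 0) (hq : ¬IsUnit q) :
    ∀ l, pencil p q l ≠ 0
  | none => hq0
  | some a => fun h => hq (hpq (sub_eq_zero.mp h ▸ dvd_mul_left q (C a)) dvd_rfl)

theorem eq_of_dvd_pencil_of_dvd_pencil (hpq : IsRelPrime p q) {H : MvPolynomial (Fin n) K}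
    (hH : ¬IsUnit H) {l l' : Option K} (hl : H ∣ pencil p q l) (hl' : H ∣ pencil p q l') :
    l = l' := by
  have hsome : ∀ a, H ∣ q → ¬H ∣ pencil p q (some a) := fun a hq ha =>
    hH (hpq (by simpa [pencil] using dvd_add ha (hq.mul_left (C a))) hq)
  match l, l' with
  | none, none => rfl
  | none, some b => exact (hsome b hl hl').elim
  | some a, none => exact (hsome a hl' hl).elim
  | some a, some b =>
    by_contra hab
    have hdiff : C (a - b) * q = pencil p q (some b) - pencil p q (some a) := by
      simp only [pencil, map_sub]; ring
    have hunit : IsUnit (C (a - b) : MvPolynomial (Fin n) K) :=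
      (sub_ne_zero.mpr fun h => hab (congrArg some h)).isUnit.map C
    exact hsome a ((hunit.dvd_mul_left).mp (hdiff ▸ dvd_sub hl' hl)) hl

theorem eval₂_ratι_div_mul_pow (hq : q ≠ 0) {u : Polynomial K} (hu : u.Splits) (k : ℕ) :
    u.eval₂ (ratι n K) (algebraMap _ (Lf n K) p / algebraMap _ _ q) *
        algebraMap _ (Lf n K) q ^ (u.natDegree + k)
      = algebraMap _ (Lf n K) (C u.leadingCoeff *
          ((u.roots.map some + Multiset.replicate k none).map (pencil p q)).prod) := by
  have hφq : algebraMap _ (Lf n K) q ≠ 0 :=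
    (map_ne_zero_iff _ (IsFractionRing.injective _ _)).mpr hq
  rw [pow_add, ← mul_assoc, hu.eval₂_div_mul_pow_natDegree _ hφq]
  simp [pencil, ratι, map_multiset_prod, Multiset.map_map, Function.comp_def, mul_assoc]

theorem exists_mul_prod_pencil_eq_of_div_mem_closure [IsAlgClosed K] (hq : q ≠ 0)
    {a b : MvPolynomial (Fin n) K} (ha : a ≠ 0) (hb : b ≠ 0)
    (hab : algebraMap _ (Lf n K) a / algebraMap _ _ b ∈ Subfield.closure
      (Set.range (ratι n K) ∪ {algebraMap _ (Lf n K) p / algebraMap _ _ q})) :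
    ∃ (c c' : K) (s t : Multiset (Option K)), c ≠ 0 ∧ c' ≠ 0 ∧
      a * (C c * (s.map (pencil p q)).prod) = b * (C c' * (t.map (pencil p q)).prod) := by
  have hφ : ∀ {x : MvPolynomial (Fin n) K}, x ≠ 0 → algebraMap _ (Lf n K) x ≠ 0 :=
    fun hx => (map_ne_zero_iff _ (IsFractionRing.injective _ _)).mpr hx
  obtain ⟨u, v, huv⟩ := Subfield.exists_eval₂_div_of_mem_closure _ hab
  have hab0 := div_ne_zero (hφ ha) (hφ hb)
  have hv : v.eval₂ (ratι n K) (algebraMap _ (Lf n K) p / algebraMap _ _ q) ≠ 0 :=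
    fun h => hab0 (by rw [huv, h, div_zero])
  have hu0 : u ≠ 0 := by rintro rfl; exact hab0 (by rw [huv, Polynomial.eval₂_zero, zero_div])
  have hv0 : v ≠ 0 := by rintro rfl; exact hv (Polynomial.eval₂_zero _ _)
  refine ⟨v.leadingCoeff, u.leadingCoeff, v.roots.map some + Multiset.replicate u.natDegree none,
    u.roots.map some + Multiset.replicate v.natDegree none, Polynomial.leadingCoeff_ne_zero.mpr hv0,
    Polynomial.leadingCoeff_ne_zero.mpr hu0, IsFractionRing.injective _ (Lf n K) ?_⟩
  rw [map_mul _ a, map_mul _ b, ← eval₂_ratι_div_mul_pow hq (IsAlgClosed.splits v) u.natDegree,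
    ← eval₂_ratι_div_mul_pow hq (IsAlgClosed.splits u) v.natDegree, add_comm v.natDegree]
  linear_combination (algebraMap _ (Lf n K) q ^ (u.natDegree + v.natDegree)) *
    (div_eq_div_iff (hφ hb) hv).mp huv

theorem emultiplicity_prod_pencil [DecidableEq K] (hpq : IsRelPrime p q)
    {H : MvPolynomial (Fin n) K} (hH : Prime H) {l : Option K} (hl : H ∣ pencil p q l)
    (s : Multiset (Option K)) :
    emultiplicity H (s.map (pencil p q)).prod = s.count l * emultiplicity H (pencil p q l) := by
  induction s using Multiset.induction with
  | empty => simp [emultiplicity_of_one_right hH.not_isUnit]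
  | cons l' s ih =>
    rw [Multiset.map_cons, Multiset.prod_cons, emultiplicity_mul hH, ih, Multiset.count_cons]
    by_cases h : l = l'
    · subst h; simp [add_mul, add_comm]
    · have hndvd : ¬H ∣ pencil p q l' := fun h' =>
        h (eq_of_dvd_pencil_of_dvd_pencil hpq hH.not_isUnit hl h')
      simp [emultiplicity_eq_zero.mpr hndvd, h]

theorem emultiplicity_eq_of_mul_prod_pencil_eq (hpq : IsRelPrime p q)
    {a b : MvPolynomial (Fin n) K} {c c' : K} (hc : c ≠ 0) (hc' : c' ≠ 0)
    {s t : Multiset (Option K)}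
    (h : a * (C c * (s.map (pencil p q)).prod) = b * (C c' * (t.map (pencil p q)).prod))
    {l : Option K} (hl : pencil p q l ≠ 0) {F G : MvPolynomial (Fin n) K} (hF : Prime F)
    (hG : Prime G) (hFl : F ∣ pencil p q l) (hGl : G ∣ pencil p q l) (hGa : ¬G ∣ a)
    (hGb : ¬G ∣ b) : emultiplicity F a = emultiplicity F b := by
  classical
  have balance : ∀ H, Prime H → H ∣ pencil p q l → emultiplicity H a +
      s.count l * emultiplicity H (pencil p q l)
        = emultiplicity H b + t.count l * emultiplicity H (pencil p q l) := by
    intro H hH hHl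
    have hunit : ∀ {d : K}, d ≠ 0 → emultiplicity H (C d) = 0 := fun hd =>
      emultiplicity_of_isUnit_right hH.not_isUnit (hd.isUnit.map C)
    simpa only [emultiplicity_mul hH, hunit hc, hunit hc', zero_add,
      emultiplicity_prod_pencil hpq hH hHl] using congrArg (emultiplicity H) h
  have hfin : ∀ H, Prime H → emultiplicity H (pencil p q l) = multiplicity H (pencil p q l) :=
    fun H hH => (FiniteMultiplicity.of_prime_left hH hl).emultiplicity_eq_multiplicity
  have hcount : s.count l = t.count l := by
    have hG0 : multiplicity G (pencil p q l) ≠ 0 := by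
      rwa [Ne, multiplicity_eq_zero, not_not]
    have := balance G hG hGl
    rw [emultiplicity_eq_zero.mpr hGa, emultiplicity_eq_zero.mpr hGb, hfin G hG] at this
    norm_cast at this
    simpa [hG0] using this
  have := balance F hF hFl
  rw [hcount, hfin F hF, ← Nat.cast_mul] at this
  exact WithTop.add_right_cancel (ENat.natCast_ne_top _) this

end Pencil

theorem stmt19_general {K : Type*} [Field K] [IsAlgClosed K]
    (p q : MvPolynomial (Fin 2) K) (hpq : IsRelPrime p q) (hq : q ≠ 0)
    (S : Finset (MvPolynomial (Fin 2) K))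
    (hirr : ∀ F ∈ S, Irreducible F)
    (hdvd : ∀ F ∈ S, ∃ l : Option K, F ∣ pencil p q l)
    (hpair : (S : Set (MvPolynomial (Fin 2) K)).Pairwise fun a b => ¬ Associated a b)
    (homit : ∀ l : Option K, ∃ G, Irreducible G ∧ G ∣ pencil p q l ∧
      ∀ F ∈ S, ¬ Associated F G)
    (m : MvPolynomial (Fin 2) K → ℤ) (hm : ∃ F ∈ S, m F ≠ 0) :
    (∏ F ∈ S, (algebraMap (MvPolynomial (Fin 2) K) (Lf 2 K) F) ^ (m F)) ∉
      Subfield.closure (Set.range (ratι 2 K) ∪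
        {algebraMap (MvPolynomial (Fin 2) K) (Lf 2 K) p /
          algebraMap (MvPolynomial (Fin 2) K) (Lf 2 K) q}) := by
  intro hg
  have hS : ∀ F ∈ S, Prime F := fun F hF => (hirr F hF).prime
  have hS0 : ∀ e : MvPolynomial (Fin 2) K → ℕ, ∏ F ∈ S, F ^ e F ≠ 0 := fun e =>
    Finset.prod_ne_zero_iff.mpr fun F hF => pow_ne_zero _ (hirr F hF).ne_zero
  rw [Finset.prod_zpow_eq_prod_pow_toNat_div S fun F hF =>
    (map_ne_zero_iff _ (IsFractionRing.injective _ _)).mpr (hirr F hF).ne_zero] at hg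
  simp only [← map_pow, ← map_prod] at hg
  obtain ⟨c, c', s, t, hc, hc', hrel⟩ :=
    exists_mul_prod_pencil_eq_of_div_mem_closure hq (hS0 _) (hS0 _) hg
  obtain ⟨F, hFS, hmF⟩ := hm
  obtain ⟨l, hFl⟩ := hdvd F hFS
  obtain ⟨G, hG, hGl, hGS⟩ := homit l
  have hq_unit : ¬IsUnit q := by
    obtain ⟨G', hG', hG'q, -⟩ := homit none
    exact fun h => hG'.not_isUnit (isUnit_of_dvd_unit hG'q h)
  have hG_ndvd : ∀ e : MvPolynomial (Fin 2) K → ℕ, ¬G ∣ ∏ F ∈ S, F ^ e F :=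
    hG.prime.not_dvd_finset_prod_pow hS fun F' hF' h => hGS F' hF' h.symm
  have hmult := emultiplicity_eq_of_mul_prod_pencil_eq hpq hc hc' hrel
    (pencil_ne_zero hpq hq hq_unit l) (hS F hFS) hG.prime hFl hGl (hG_ndvd _) (hG_ndvd _)
  rw [emultiplicity_finset_prod_pow_of_mem hS hpair hFS,
    emultiplicity_finset_prod_pow_of_mem hS hpair hFS, Nat.cast_inj] at hmult
  omega

theorem stmt19 {K : Type*} [Field K] [IsAlgClosed K] [CharZero K]
    (p q : MvPolynomial (Fin 2) K) (hpq : IsRelPrime p q) (hq : q ≠ 0)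
    (hnc : ¬ IsComposite (algebraMap (MvPolynomial (Fin 2) K) (Lf 2 K) p /
      algebraMap (MvPolynomial (Fin 2) K) (Lf 2 K) q))
    (S : Finset (MvPolynomial (Fin 2) K))
    (hirr : ∀ F ∈ S, Irreducible F)
    (hdvd : ∀ F ∈ S, ∃ l : Option K, F ∣ pencil p q l)
    (hpair : (S : Set (MvPolynomial (Fin 2) K)).Pairwise fun a b => ¬ Associated a b)
    (homit : ∀ l : Option K, ∃ G, Irreducible G ∧ G ∣ pencil p q l ∧
      ∀ F ∈ S, ¬ Associated F G)
    (m : MvPolynomial (Fin 2) K → ℤ) (hm : ∃ F ∈ S, m F ≠ 0) :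
    (∏ F ∈ S, (algebraMap (MvPolynomial (Fin 2) K) (Lf 2 K) F) ^ (m F)) ∉
      Subfield.closure (Set.range (ratι 2 K) ∪
        {algebraMap (MvPolynomial (Fin 2) K) (Lf 2 K) p /
          algebraMap (MvPolynomial (Fin 2) K) (Lf 2 K) q}) :=
  stmt19_general p q hpq hq S hirr hdvd hpair homit m hm

end
end
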